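/- arXiv:1112.0424 — 3 statements merged into one kernel-verified Lean document; each statement's English description precedes it below -/
import Mathlib

section
/- For the Lorentzian metric g₁ on the 3-dimensional Heisenberg algebra (g(F₁,F₁)=g(F₂,F₂)=1, g(F₃,F₃)=−1, [F₂,F₃]=F₁), the Ricci tensor computed from the left-invariant Levi-Civita connection satisfies Rc(F₁,F₁) = −1/2, Rc(F₂,F₂) = 1/2, Rc(F₃,F₃) = −1/2, and all off-diagonal components vanish. -/
noncomputable section

/-- The underlying vector space `ℝ³` of the 3-dimensional Heisenberg Lie algebra. -/
abbrev V3 : Type := Fin 3 → ℝ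

/-- The standard basis vectors `F₁ = oe 0`, `F₂ = oe 1`, `F₃ = oe 2`. -/
def oe (i : Fin 3) : V3 := Pi.single i 1

/-- The Heisenberg bracket: `[F₂,F₃] = F₁`, all other brackets zero. -/
def br (x y : V3) : V3 := fun i => if i = 0 then x 1 * y 2 - x 2 * y 1 else 0

/-- The Lorentzian metric `g₁`: `g(F₁,F₁) = g(F₂,F₂) = 1`, `g(F₃,F₃) = -1`. -/
def g1 (x y : V3) : ℝ := x 0 * y 0 + x 1 * y 1 - x 2 * y 2

/-- `D` is a derivation of the bracket. -/
def IsDer (D : V3 →ₗ[ℝ] V3) : Prop :=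
  ∀ x y : V3, D (br x y) = br (D x) y + br x (D y)

/-- The Koszul formula characterizing the left-invariant Levi-Civita connection. -/
def Koszul (nab : V3 →ₗ[ℝ] V3 →ₗ[ℝ] V3) : Prop :=
  ∀ x y z : V3, 2 * g1 (nab x y) z = g1 (br x y) z - g1 (br y z) x + g1 (br z x) y

/-- Curvature tensor `R(X,Y)Z = ∇_X∇_Y Z − ∇_Y∇_X Z − ∇_{[X,Y]}Z`. -/
def Rcurv (nab : V3 →ₗ[ℝ] V3 →ₗ[ℝ] V3) (x y z : V3) : V3 :=
  nab x (nab y z) - nab y (nab x z) - nab (br x y) z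

/-- Ricci tensor `Rc(X,Y) = Σᵢ εᵢ g(R(eᵢ,X)Y, eᵢ)` over the pseudo-orthonormal basis. -/
def Rc (nab : V3 →ₗ[ℝ] V3 →ₗ[ℝ] V3) (x y : V3) : ℝ :=
  ∑ i : Fin 3, g1 (oe i) (oe i) * g1 (Rcurv nab (oe i) x y) (oe i)


/-- Explicit formula for the Levi-Civita connection. -/
def Nv (x y : V3) : V3 :=
  ![(x 1 * y 2 - x 2 * y 1) / 2, (x 0 * y 2 + x 2 * y 0) / 2, (x 0 * y 1 + x 1 * y 0) / 2]

lemma nab_eq (nab : V3 →ₗ[ℝ] V3 →ₗ[ℝ] V3) (hK : Koszul nab) :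
    ∀ x y : V3, nab x y = Nv x y := by
  intro x y
  funext k
  fin_cases k
  · have h := hK x y (oe 0)
    simp [g1, br, oe, Pi.single_apply, Nv] at h ⊢
    linarith
  · have h := hK x y (oe 1)
    simp [g1, br, oe, Pi.single_apply, Nv] at h ⊢
    linarith
  · have h := hK x y (oe 2)
    simp [g1, br, oe, Pi.single_apply, Nv] at h ⊢
    linarith

/-- the Ricci tensor of `g₁` on 𝔥₃ satisfies `Rc(F₁,F₁) = −1/2`,
`Rc(F₂,F₂) = 1/2`, `Rc(F₃,F₃) = −1/2`, and all off-diagonal components vanish. -/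
theorem heisenberg_g1_ricci (nab : V3 →ₗ[ℝ] V3 →ₗ[ℝ] V3) (hK : Koszul nab) :
    Rc nab (oe 0) (oe 0) = -(1 / 2) ∧
    Rc nab (oe 1) (oe 1) = 1 / 2 ∧
    Rc nab (oe 2) (oe 2) = -(1 / 2) ∧
    ∀ i j : Fin 3, i ≠ j → Rc nab (oe i) (oe j) = 0 := by
  have h := nab_eq nab hK
  refine ⟨?_, ?_, ?_, ?_⟩
  · simp [Rc, Rcurv, h, Nv, g1, br, oe, Pi.single_apply, Fin.sum_univ_three]
    norm_num
  · simp [Rc, Rcurv, h, Nv, g1, br, oe, Pi.single_apply, Fin.sum_univ_three]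
    norm_num
  · simp [Rc, Rcurv, h, Nv, g1, br, oe, Pi.single_apply, Fin.sum_univ_three]
    norm_num
  · intro i j hij
    fin_cases i <;> fin_cases j <;>
      simp_all [Rc, Rcurv, h, Nv, g1, br, oe, Pi.single_apply, Fin.sum_univ_three] <;>
      norm_num
end
end

section
/- The Lorentzian metric g₁ on the 3-dimensional Heisenberg algebra (g(F₁,F₁)=g(F₂,F₂)=1, g(F₃,F₃)=−1, [F₂,F₃]=F₁) is a nilsoliton: the Ricci operator satisfies Ric = (3/2)·Id + D, where D is the derivation with D(F₁) = −2F₁, D(F₂) = −F₂, D(F₃) = −F₃. -/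
noncomputable section

/-- `g₁` on 𝔥₃ is a nilsoliton: `Ric = (3/2)·Id + D` where `D` is the
derivation with `D F₁ = −2F₁`, `D F₂ = −F₂`, `D F₃ = −F₃`. -/
theorem heisenberg_g1_nilsoliton (nab : V3 →ₗ[ℝ] V3 →ₗ[ℝ] V3) (hK : Koszul nab)
    (Ric : V3 →ₗ[ℝ] V3) (hRic : ∀ x y : V3, g1 (Ric x) y = Rc nab x y) :
    ∃ D : V3 →ₗ[ℝ] V3, IsDer D ∧
      D (oe 0) = (-2 : ℝ) • oe 0 ∧
      D (oe 1) = -oe 1 ∧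
      D (oe 2) = -oe 2 ∧
      ∀ x : V3, Ric x = (3 / 2 : ℝ) • x + D x := by
  -- nondegeneracy of g1
  have ext : ∀ v w : V3, (∀ k : Fin 3, 2 * g1 v (oe k) = 2 * g1 w (oe k)) → v = w := by
    intro v w h
    have h0 := h 0; have h1 := h 1; have h2 := h 2
    simp [g1, oe, Pi.single_apply] at h0 h1 h2
    funext k
    fin_cases k
    · simpa using h0
    · simpa using h1
    · simpa using h2
  -- solve Koszul for basis values
  have hsolve : ∀ x y w : V3,
      (∀ k : Fin 3, g1 (br x y) (oe k) - g1 (br y (oe k)) x + g1 (br (oe k) x) y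
        = 2 * g1 w (oe k)) → nab x y = w := by
    intro x y w h
    apply ext
    intro k
    rw [hK x y (oe k), h k]
  have h00 : nab (oe 0) (oe 0) = 0 := by
    apply hsolve; intro k
    fin_cases k <;> simp [g1, br, oe, Pi.single_apply] <;> ring
  have h01 : nab (oe 0) (oe 1) = (1/2 : ℝ) • oe 2 := by
    apply hsolve; intro k
    fin_cases k <;> simp [g1, br, oe, Pi.single_apply] <;> ring
  have h02 : nab (oe 0) (oe 2) = (1/2 : ℝ) • oe 1 := by
    apply hsolve; intro k
    fin_cases k <;> simp [g1, br, oe, Pi.single_apply] <;> ring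
  have h10 : nab (oe 1) (oe 0) = (1/2 : ℝ) • oe 2 := by
    apply hsolve; intro k
    fin_cases k <;> simp [g1, br, oe, Pi.single_apply] <;> ring
  have h11 : nab (oe 1) (oe 1) = 0 := by
    apply hsolve; intro k
    fin_cases k <;> simp [g1, br, oe, Pi.single_apply] <;> ring
  have h12 : nab (oe 1) (oe 2) = (1/2 : ℝ) • oe 0 := by
    apply hsolve; intro k
    fin_cases k <;> simp [g1, br, oe, Pi.single_apply] <;> ring
  have h20 : nab (oe 2) (oe 0) = (1/2 : ℝ) • oe 1 := by
    apply hsolve; intro k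
    fin_cases k <;> simp [g1, br, oe, Pi.single_apply] <;> ring
  have h21 : nab (oe 2) (oe 1) = (-(1/2) : ℝ) • oe 0 := by
    apply hsolve; intro k
    fin_cases k <;> simp [g1, br, oe, Pi.single_apply] <;> ring
  have h22 : nab (oe 2) (oe 2) = 0 := by
    apply hsolve; intro k
    fin_cases k <;> simp [g1, br, oe, Pi.single_apply] <;> ring
  -- bracket values on basis
  have b12 : br (oe 1) (oe 2) = oe 0 := by
    funext k; fin_cases k <;> simp [br, oe, Pi.single_apply]
  have b21 : br (oe 2) (oe 1) = -oe 0 := by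
    funext k; fin_cases k <;> simp [br, oe, Pi.single_apply]
  have b00 : br (oe 0) (oe 0) = 0 := by
    funext k; fin_cases k <;> simp [br, oe, Pi.single_apply]
  have b01 : br (oe 0) (oe 1) = 0 := by
    funext k; fin_cases k <;> simp [br, oe, Pi.single_apply]
  have b02 : br (oe 0) (oe 2) = 0 := by
    funext k; fin_cases k <;> simp [br, oe, Pi.single_apply]
  have b10 : br (oe 1) (oe 0) = 0 := by
    funext k; fin_cases k <;> simp [br, oe, Pi.single_apply]
  have b11 : br (oe 1) (oe 1) = 0 := by
    funext k; fin_cases k <;> simp [br, oe, Pi.single_apply]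
  have b20 : br (oe 2) (oe 0) = 0 := by
    funext k; fin_cases k <;> simp [br, oe, Pi.single_apply]
  have b22 : br (oe 2) (oe 2) = 0 := by
    funext k; fin_cases k <;> simp [br, oe, Pi.single_apply]
  -- Ric on basis
  have extg3 : ∀ v w : V3, g1 v (oe 0) = g1 w (oe 0) → g1 v (oe 1) = g1 w (oe 1) →
      g1 v (oe 2) = g1 w (oe 2) → v = w := by
    intro v w e0 e1 e2
    apply ext; intro k; fin_cases k
    · show 2 * g1 v (oe 0) = 2 * g1 w (oe 0); rw [e0]
    · show 2 * g1 v (oe 1) = 2 * g1 w (oe 1); rw [e1]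
    · show 2 * g1 v (oe 2) = 2 * g1 w (oe 2); rw [e2]
  have hR0 : Ric (oe 0) = (-(1/2) : ℝ) • oe 0 := by
    refine extg3 _ _ ?_ ?_ ?_ <;>
    · rw [hRic]
      simp only [Rc, Rcurv, Fin.sum_univ_three,
        b00, b01, b02, b10, b11, b12, b20, b21, b22,
        h00, h01, h02, h10, h11, h12, h20, h21, h22,
        map_smul, map_neg, map_zero, smul_zero, neg_zero, smul_neg,
        LinearMap.neg_apply, LinearMap.zero_apply, LinearMap.smul_apply]
      norm_num [g1, oe, Pi.single_apply, Pi.smul_apply, Pi.sub_apply, Pi.neg_apply,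
        smul_eq_mul, Fin.ext_iff]
  have hR1 : Ric (oe 1) = ((1/2) : ℝ) • oe 1 := by
    refine extg3 _ _ ?_ ?_ ?_ <;>
    · rw [hRic]
      simp only [Rc, Rcurv, Fin.sum_univ_three,
        b00, b01, b02, b10, b11, b12, b20, b21, b22,
        h00, h01, h02, h10, h11, h12, h20, h21, h22,
        map_smul, map_neg, map_zero, smul_zero, neg_zero, smul_neg,
        LinearMap.neg_apply, LinearMap.zero_apply, LinearMap.smul_apply]
      norm_num [g1, oe, Pi.single_apply, Pi.smul_apply, Pi.sub_apply, Pi.neg_apply,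
        smul_eq_mul, Fin.ext_iff]
  have hR2 : Ric (oe 2) = ((1/2) : ℝ) • oe 2 := by
    refine extg3 _ _ ?_ ?_ ?_ <;>
    · rw [hRic]
      simp only [Rc, Rcurv, Fin.sum_univ_three,
        b00, b01, b02, b10, b11, b12, b20, b21, b22,
        h00, h01, h02, h10, h11, h12, h20, h21, h22,
        map_smul, map_neg, map_zero, smul_zero, neg_zero, smul_neg,
        LinearMap.neg_apply, LinearMap.zero_apply, LinearMap.smul_apply]
      norm_num [g1, oe, Pi.single_apply, Pi.smul_apply, Pi.sub_apply, Pi.neg_apply,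
        smul_eq_mul, Fin.ext_iff]
  -- the derivation D
  refine ⟨{ toFun := fun x => (fun k => if k = 0 then -2 * x 0 else -x k : V3)
            map_add' := by
              intro x y; funext k; by_cases h : k = 0 <;> simp [h] <;> ring
            map_smul' := by
              intro c x; funext k; by_cases h : k = 0 <;> simp [h] <;> ring },
          ?_, ?_, ?_, ?_, ?_⟩
  · intro x y
    funext k
    simp only [LinearMap.coe_mk, AddHom.coe_mk, br, Pi.add_apply]
    by_cases h : k = 0 <;> simp [h] <;> ring
  · funext k
    simp only [LinearMap.coe_mk, AddHom.coe_mk, Pi.smul_apply, smul_eq_mul]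
    fin_cases k <;> simp [oe, Pi.single_apply]
  · funext k
    simp only [LinearMap.coe_mk, AddHom.coe_mk, Pi.neg_apply]
    fin_cases k <;> simp [oe, Pi.single_apply]
  · funext k
    simp only [LinearMap.coe_mk, AddHom.coe_mk, Pi.neg_apply]
    fin_cases k <;> simp [oe, Pi.single_apply]
  · intro x
    have hx : x = x 0 • oe 0 + x 1 • oe 1 + x 2 • oe 2 := by
      funext k; fin_cases k <;> simp [oe, Pi.single_apply]
    rw [hx]
    simp only [map_add, map_smul, hR0, hR1, hR2]
    funext k
    simp only [LinearMap.coe_mk, AddHom.coe_mk, Pi.add_apply, Pi.smul_apply, smul_eq_mul]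
    fin_cases k <;> simp [oe, Pi.single_apply] <;> ring
end
end

section
/- If the Ricci operator of the Lorentzian metric g₁ on the 3-dimensional Heisenberg algebra satisfies Ric = c·Id + D with D a derivation, then necessarily c = 3/2 and D is the diagonal derivation D(F₁) = −2F₁, D(F₂) = −F₂, D(F₃) = −F₃; i.e., the algebraic Ricci soliton constant and derivation are unique. -/
noncomputable section

set_option linter.unnecessarySeqFocus false
set_option maxHeartbeats 3200000 in
/-- uniqueness of the algebraic Ricci soliton constant and derivation for
`g₁` on 𝔥₃: if `Ric = c·Id + D` with `D` a derivation, then `c = 3/2` and `D` is the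
diagonal derivation `D F₁ = −2F₁`, `D F₂ = −F₂`, `D F₃ = −F₃`. -/
theorem heisenberg_g1_soliton_unique (nab : V3 →ₗ[ℝ] V3 →ₗ[ℝ] V3) (hK : Koszul nab)
    (Ric : V3 →ₗ[ℝ] V3) (hRic : ∀ x y : V3, g1 (Ric x) y = Rc nab x y)
    (c : ℝ) (D : V3 →ₗ[ℝ] V3) (hD : IsDer D)
    (hsol : ∀ x : V3, Ric x = c • x + D x) :
    c = 3 / 2 ∧
    D (oe 0) = (-2 : ℝ) • oe 0 ∧
    D (oe 1) = -oe 1 ∧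
    D (oe 2) = -oe 2 := by
  have oeval : ∀ i k : Fin 3, oe i k = if k = i then (1:ℝ) else 0 :=
    fun i k => Pi.single_apply i 1 k
  -- bracket values on the basis
  have b12 : br (oe 1) (oe 2) = oe 0 := by
    funext k; fin_cases k <;> simp [br, oe, Pi.single_apply]
  have b21 : br (oe 2) (oe 1) = -oe 0 := by
    funext k; fin_cases k <;> simp [br, oe, Pi.single_apply]
  have b0l : ∀ y : V3, br (oe 0) y = 0 := by
    intro y; funext k; fin_cases k <;> simp [br, oe, Pi.single_apply]
  have b0r : ∀ x : V3, br x (oe 0) = 0 := by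
    intro x; funext k; fin_cases k <;> simp [br, oe, Pi.single_apply]
  have bsame : ∀ i : Fin 3, br (oe i) (oe i) = 0 := by
    intro i; funext k; fin_cases k <;> simp [br]; ring
  -- nab on the basis
  have n00 : nab (oe 0) (oe 0) = 0 := by
    funext k
    have h := hK (oe 0) (oe 0) (oe k)
    fin_cases k <;> simp [g1, br, oe, Pi.single_apply] at h ⊢ <;> linarith
  have n01 : nab (oe 0) (oe 1) = (1/2 : ℝ) • oe 2 := by
    funext k
    have h := hK (oe 0) (oe 1) (oe k)
    fin_cases k <;> simp [g1, br, oe, Pi.single_apply] at h ⊢ <;> linarith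
  have n02 : nab (oe 0) (oe 2) = (1/2 : ℝ) • oe 1 := by
    funext k
    have h := hK (oe 0) (oe 2) (oe k)
    fin_cases k <;> simp [g1, br, oe, Pi.single_apply] at h ⊢ <;> linarith
  have n10 : nab (oe 1) (oe 0) = (1/2 : ℝ) • oe 2 := by
    funext k
    have h := hK (oe 1) (oe 0) (oe k)
    fin_cases k <;> simp [g1, br, oe, Pi.single_apply] at h ⊢ <;> linarith
  have n11 : nab (oe 1) (oe 1) = 0 := by
    funext k
    have h := hK (oe 1) (oe 1) (oe k)
    fin_cases k <;> simp [g1, br, oe, Pi.single_apply] at h ⊢ <;> linarith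
  have n12 : nab (oe 1) (oe 2) = (1/2 : ℝ) • oe 0 := by
    funext k
    have h := hK (oe 1) (oe 2) (oe k)
    fin_cases k <;> simp [g1, br, oe, Pi.single_apply] at h ⊢ <;> linarith
  have n20 : nab (oe 2) (oe 0) = (1/2 : ℝ) • oe 1 := by
    funext k
    have h := hK (oe 2) (oe 0) (oe k)
    fin_cases k <;> simp [g1, br, oe, Pi.single_apply] at h ⊢ <;> linarith
  have n21 : nab (oe 2) (oe 1) = (-(1/2) : ℝ) • oe 0 := by
    funext k
    have h := hK (oe 2) (oe 1) (oe k)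
    fin_cases k <;> simp [g1, br, oe, Pi.single_apply] at h ⊢ <;> linarith
  have n22 : nab (oe 2) (oe 2) = 0 := by
    funext k
    have h := hK (oe 2) (oe 2) (oe k)
    fin_cases k <;> simp [g1, br, oe, Pi.single_apply] at h ⊢ <;> linarith
  -- Ricci operator on the basis
  have ric : ∀ i k : Fin 3, Ric (oe i) k =
      if k = i then (if i = 0 then -(1/2 : ℝ) else (1/2 : ℝ)) else 0 := by
    intro i k
    have h := hRic (oe i) (oe k)
    rw [Rc] at h
    fin_cases i <;> fin_cases k <;>
      simp [Fin.sum_univ_three, Rcurv, b12, b21, b0l, b0r, bsame,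
        n00, n01, n02, n10, n11, n12, n20, n21, n22,
        map_smul, map_neg, map_zero, LinearMap.neg_apply, LinearMap.smul_apply,
        LinearMap.zero_apply, smul_smul, g1, oeval] at h ⊢ <;> linarith
  -- D on the basis, componentwise
  have dcomp : ∀ i k : Fin 3, D (oe i) k = Ric (oe i) k - c * (oe i k) := by
    intro i k
    have h := congrFun (hsol (oe i)) k
    simp [Pi.add_apply, Pi.smul_apply, smul_eq_mul] at h
    linarith
  -- value of c from the derivation property
  have hc : c = 3 / 2 := by
    have h := hD (oe 1) (oe 2)
    rw [b12] at h
    have h0 := congrFun h 0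
    have e1 := dcomp 0 0
    have e2 := dcomp 1 1
    have e3 := dcomp 2 2
    simp [br, ric, oeval] at e1 e2 e3 h0
    linarith
  subst hc
  refine ⟨rfl, ?_, ?_, ?_⟩ <;>
    · funext k
      fin_cases k <;> simp [dcomp, ric, oeval] <;> norm_num
end
end
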